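/- Let N be a rooted phylogenetic network on X with vertex set V. Then N is tree-based if and only if there exists an antichain S of vertices of N and a partition of V into |S| chains, each of which forms a directed path in N ending at a leaf in X. -/

import Mathlib

open Relation

/-- Out-degree of a vertex in a digraph given by its arc relation. -/
noncomputable def outDeg {V : Type*} (A : V → V → Prop) (v : V) : ℕ := {u | A v u}.ncard
/-- In-degree of a vertex in a digraph given by its arc relation. -/
noncomputable def inDeg {V : Type*} (A : V → V → Prop) (v : V) : ℕ := {u | A u v}.ncard

/-- A rooted phylogenetic network on leaf set `X`. -/
structure PhyloNet (V : Type*) [Fintype V] [DecidableEq V] where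
  Arc : V → V → Prop
  root : V
  X : Finset V
  acyclic : ∀ v, ¬ Relation.TransGen Arc v v
  reach : ∀ v, Relation.ReflTransGen Arc root v
  root_out : 1 ≤ outDeg Arc root
  leaf_iff : ∀ v, v ∈ X ↔ outDeg Arc v = 0
  leaf_in : ∀ v ∈ X, inDeg Arc v = 1
  internal : ∀ v, v ≠ root → v ∉ X →
    (inDeg Arc v = 1 ∧ 2 ≤ outDeg Arc v) ∨ (2 ≤ inDeg Arc v ∧ outDeg Arc v = 1)

section Defs
variable {V : Type*} [Fintype V] [DecidableEq V]

/-- A reticulation: in-degree at least two. -/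
def IsRetic (N : PhyloNet V) (v : V) : Prop := 2 ≤ inDeg N.Arc v
/-- A tree vertex: a non-leaf vertex of in-degree at most one. -/
def IsTreeVert (N : PhyloNet V) (v : V) : Prop := v ∉ N.X ∧ inDeg N.Arc v ≤ 1
/-- An omnian: a non-leaf vertex all of whose children are reticulations. -/
def IsOmnian (N : PhyloNet V) (v : V) : Prop := v ∉ N.X ∧ ∀ u, N.Arc v u → IsRetic N u
/-- A binary network: all in- and out-degrees are at most two. -/
def IsBinary (N : PhyloNet V) : Prop := ∀ v : V, inDeg N.Arc v ≤ 2 ∧ outDeg N.Arc v ≤ 2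

/-- A rooted spanning tree of `N` with the same root as `N`. -/
def IsRSTree (N : PhyloNet V) (T : V → V → Prop) : Prop :=
  (∀ u v, T u v → N.Arc u v) ∧ (∀ v, inDeg T v = 0 ↔ v = N.root) ∧
  (∀ v, v ≠ N.root → inDeg T v = 1)

/-- A support tree: a rooted spanning tree with the same root, all of whose leaves are in `X`. -/
def IsSupportTree (N : PhyloNet V) (T : V → V → Prop) : Prop :=
  IsRSTree N T ∧ ∀ v, outDeg T v = 0 → v ∈ N.X

/-- Tree-based network. -/
def TreeBased (N : PhyloNet V) : Prop := ∃ T, IsSupportTree N T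

/-- A (nonempty, repetition-free) directed path recorded as a list of vertices. -/
def IsPathIn (A : V → V → Prop) (p : List V) : Prop := p ≠ [] ∧ p.Chain' A ∧ p.Nodup
/-- The path ends at a vertex of `X`. -/
def EndsIn (X : Finset V) (p : List V) : Prop := ∃ x ∈ X, p.getLast? = some x
/-- Pairwise vertex-disjoint family of paths. -/
def PairwiseDisj (P : Finset (List V)) : Prop :=
  ∀ p ∈ P, ∀ q ∈ P, p ≠ q → ∀ v : V, v ∈ p → v ∉ q
/-- A partition of the vertex set of `N` into vertex-disjoint directed paths
ending at leaves in `X`. -/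
def IsPathPartition (N : PhyloNet V) (P : Finset (List V)) : Prop :=
  (∀ p ∈ P, IsPathIn N.Arc p ∧ EndsIn N.X p) ∧ PairwiseDisj P ∧ ∀ v : V, ∃ p ∈ P, v ∈ p

/-- A matching in the bipartite graph with edge set `E` (edges from a first copy of `V`
to a second copy of `V`), recorded as a set of edges no two of which share an endpoint. -/
def IsMatchingOn (E : V → V → Prop) (M : Finset (V × V)) : Prop :=
  (∀ e ∈ M, E e.1 e.2) ∧ ∀ e ∈ M, ∀ f ∈ M, (e.1 = f.1 ∨ e.2 = f.2) → e = f

/-- Size of a maximum matching of the bipartite graph with edge set `E`. -/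
noncomputable def maxMatching (E : V → V → Prop) : ℕ :=
  sSup {n | ∃ M : Finset (V × V), IsMatchingOn E M ∧ M.card = n}

/-- An antichain of vertices of `N`. -/
def AntichainIn (N : PhyloNet V) (S : Finset V) : Prop :=
  ∀ u ∈ S, ∀ v ∈ S, u ≠ v → ¬ Relation.TransGen N.Arc u v

/-- The antichain-to-leaf property: from every antichain there are pairwise
vertex-disjoint directed paths to leaves, one starting at each antichain element. -/
def AntichainToLeaf (N : PhyloNet V) : Prop :=
  ∀ S : Finset V, AntichainIn N S →
    ∃ f : V → List V,
      (∀ s ∈ S, IsPathIn N.Arc (f s) ∧ (f s).head? = some s ∧ EndsIn N.X (f s)) ∧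
      ∀ s ∈ S, ∀ t ∈ S, s ≠ t → ∀ v : V, v ∈ f s → v ∉ f t

/-- A temporal network: a real labelling strictly increasing along tree arcs and
constant along reticulation arcs. -/
def Temporal (N : PhyloNet V) : Prop :=
  ∃ l : V → ℝ, ∀ u v, N.Arc u v →
    (IsRetic N v → l u = l v) ∧ (¬ IsRetic N v → l u < l v)

/-- `N'` is a binary refinement of `N`, witnessed by the contraction map `φ`:
`N` is obtained from the binary network `N'` by contracting the arcs whose endpoints
are identified by `φ`. -/
def IsBinRefinement {V' : Type*} [Fintype V'] [DecidableEq V']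
    (N' : PhyloNet V') (N : PhyloNet V) (φ : V' → V) : Prop :=
  IsBinary N' ∧ Function.Surjective φ ∧ φ N'.root = N.root ∧
  N'.X.image φ = N.X ∧ Set.InjOn φ ↑N'.X ∧
  (∀ u v : V, N.Arc u v ↔ ∃ u' v', φ u' = u ∧ φ v' = v ∧ N'.Arc u' v' ∧ φ u' ≠ φ v') ∧
  (∀ a b : V', φ a = φ b →
    Relation.ReflTransGen (fun x y => (N'.Arc x y ∨ N'.Arc y x) ∧ φ x = φ y) a b)

/-- Edge of the bipartite graph `B_N` between omnians and reticulations. -/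
def BEdge (N : PhyloNet V) (o r : V) : Prop := IsOmnian N o ∧ IsRetic N r ∧ N.Arc o r
/-- Edge of the bipartite graph `Z_N` between tree vertices with a reticulation child
and reticulations. -/
def ZEdge (N : PhyloNet V) (t r : V) : Prop :=
  IsTreeVert N t ∧ (∃ r', N.Arc t r' ∧ IsRetic N r') ∧ IsRetic N r ∧ N.Arc t r

/-- `R_t`: reticulations with no reticulation parent. -/
def Rt (N : PhyloNet V) (v : V) : Prop := IsRetic N v ∧ ∀ u, N.Arc u v → ¬ IsRetic N u
/-- `Q_t`: vertices with a child in `R_t`. -/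
def Qt (N : PhyloNet V) (v : V) : Prop := ∃ r, N.Arc v r ∧ Rt N r
/-- Edge of the bipartite graph `J_N`. -/
def JEdge (N : PhyloNet V) (q r : V) : Prop := Qt N q ∧ Rt N r ∧ N.Arc q r

/-- A supporting set for `J_N`. -/
def IsSupportingSet (N : PhyloNet V) (E : Finset (V × V)) : Prop :=
  (∀ e ∈ E, JEdge N e.1 e.2) ∧
  (∀ q, Qt N q → IsOmnian N q → ∃ e ∈ E, e.1 = q) ∧
  (∀ r, Rt N r → ∃! e : V × V, e ∈ E ∧ e.2 = r)

/-- An arboreal arc: `u` is a reticulation, or `v` is a tree vertex or a leaf. -/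
def ArborealArc (N : PhyloNet V) (u v : V) : Prop :=
  N.Arc u v ∧ (IsRetic N u ∨ ¬ IsRetic N v)

/-- The number of support trees of `N`, identified with their arc sets. -/
noncomputable def supCount (N : PhyloNet V) : ℕ :=
  {A' : Finset (V × V) | IsSupportTree N (fun u v => (u, v) ∈ A')}.ncard

/-- The bipartite graph `J_N`, as a simple graph on `Q_t ∪ R_t`. -/
def Jgraph (N : PhyloNet V) : SimpleGraph {v : V // Qt N v ∨ Rt N v} where
  Adj a b := JEdge N a.1 b.1 ∨ JEdge N b.1 a.1
  symm := by constructor; intro a b h; tauto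
  loopless := by
    constructor
    rintro a (⟨_, _, h⟩ | ⟨_, _, h⟩) <;> exact N.acyclic _ (Relation.TransGen.single h)

/-- Degree in `J_N`. -/
noncomputable def Jdeg (N : PhyloNet V) (a : {v : V // Qt N v ∨ Rt N v}) : ℕ :=
  ((Jgraph N).neighborSet a).ncard

end Defs

/-- A rooted tree (equivalently, a subdivision of a rooted tree): a rooted digraph
in which every non-root vertex has in-degree one and everything is reachable
from the root. -/
structure RootedDirTree (V : Type*) [Fintype V] [DecidableEq V] where
  Arc : V → V → Prop
  root : V
  acyclic : ∀ v, ¬ Relation.TransGen Arc v v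
  reach : ∀ v, Relation.ReflTransGen Arc root v
  root_in : inDeg Arc root = 0
  in_one : ∀ v, v ≠ root → inDeg Arc v = 1

/-!
Each leaf has no out-arc, so it is the last vertex of its path; hence any partition of the
vertices into paths ending at leaves has exactly `|X|` paths, and `S = X` is an antichain.
So the claim is that `N` is tree-based iff such a path partition exists.

Given a partition, let every vertex other than the root take as parent its predecessor on its
path, or an arbitrary parent in `N` if it starts its path: this is a spanning tree whose leaves
are path ends, i.e. leaves of `N`. Conversely, given a support tree, choose a tree child `g v`
of every non-leaf `v`. As tree in-degrees are at most one, `g` is injective off `X`, so the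
`g`-trajectories started at the vertices outside the image of `g` and stopped on entering `X`
are disjoint and cover every vertex.
-/

namespace List

variable {α : Type*} {R : α → α → Prop}

theorem IsChain.nodup_of_acyclic {l : List α} (hl : l.IsChain R)
    (hR : ∀ a, ¬ Relation.TransGen R a a) : l.Nodup :=
  have : Std.Irrefl (Relation.TransGen R) := ⟨hR⟩
  (isChain_iff_pairwise.1 (hl.imp fun _ _ h => Relation.TransGen.single h)).nodup

theorem IsChain.rel_of_pair_infix {l : List α} (hl : l.IsChain R) {a b : α}
    (h : [a, b] <:+: l) : R a b :=
  isChain_pair.1 (hl.infix h)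

theorem IsChain.getLast?_eq_or_exists_rel {v : α} :
    ∀ {l : List α}, l.IsChain R → v ∈ l → l.getLast? = some v ∨ ∃ w, R v w
  | [_], _, hv => .inl (by simp_all)
  | a :: b :: l, hl, hv => by
    obtain ⟨hab, hl⟩ := isChain_cons_cons.1 hl
    rcases mem_cons.1 hv with rfl | hv
    · exact .inr ⟨b, hab⟩
    · rw [getLast?_cons_cons]
      exact hl.getLast?_eq_or_exists_rel hv

theorem Nodup.eq_of_pair_infix {l : List α} (hl : l.Nodup) {u u' v : α}
    (h : [u, v] <:+: l) (h' : [u', v] <:+: l) : u = u' := by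
  obtain ⟨k, hk, hkl⟩ := infix_iff_getElem?.1 h
  obtain ⟨k', -, hkl'⟩ := infix_iff_getElem?.1 h'
  have hv := (hkl 1 (by simp)).trans (hkl' 1 (by simp)).symm
  obtain rfl : k = k' := by
    have := (getElem?_inj (by simp at hk; omega) hl).1 hv
    omega
  simpa using (hkl 0 (by simp)).symm.trans (hkl' 0 (by simp))

end List

section Degree

variable {V : Type*} {A : V → V → Prop}

theorem outDeg_eq_zero_iff [Finite V] {v : V} : outDeg A v = 0 ↔ ∀ w, ¬ A v w := by
  rw [outDeg, Set.ncard_eq_zero, Set.eq_empty_iff_forall_notMem]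
  rfl

theorem wellFounded_of_acyclic [Finite V] (hA : ∀ v, ¬ Relation.TransGen A v v) :
    WellFounded A :=
  have : Std.Irrefl (Relation.TransGen A) := ⟨hA⟩
  Subrelation.wf (fun h => Relation.TransGen.single h)
    (Finite.wellFounded_of_trans_of_irrefl (Relation.TransGen A))

theorem eq_of_inDeg_le_one [Finite V] {u u' v : V} (hv : inDeg A v ≤ 1) (hu : A u v)
    (hu' : A u' v) : u = u' :=
  (Set.ncard_le_one).1 hv u hu u' hu'

theorem inDeg_of_parentMap [DecidableEq V] (r : V) (f : V → V) (v : V) :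
    inDeg (fun u w => w ≠ r ∧ f w = u) v = if v = r then 0 else 1 := by
  unfold inDeg
  split_ifs with h <;> simp [h]

end Degree

section Trajectory

open Function

variable {V : Type*} {X : Set V} {g : V → V}

variable (X g) in
/-- Meaningful only if the orbit of `v` meets `X`: otherwise `sInf ∅ = 0`. -/
noncomputable def hitTime (v : V) : ℕ := sInf {n | g^[n] v ∈ X}

variable (X g) in
noncomputable def trajectory (v : V) : List V :=
  List.iterate g v (hitTime X g v + 1)

theorem exists_iterate_mem {A : V → V → Prop} (hA : WellFounded (flip A))
    (hg : ∀ v ∉ X, A v (g v)) (v : V) : ∃ n, g^[n] v ∈ X := by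
  induction v using hA.induction with
  | _ v ih =>
    by_cases hv : v ∈ X
    · exact ⟨0, hv⟩
    · obtain ⟨n, hn⟩ := ih (g v) (hg v hv)
      exact ⟨n + 1, hn⟩

theorem iterate_hitTime_mem {v : V} (h : ∃ n, g^[n] v ∈ X) : g^[hitTime X g v] v ∈ X :=
  Nat.sInf_mem h

theorem iterate_notMem_of_lt_hitTime {v : V} {m : ℕ} (hm : m < hitTime X g v) :
    g^[m] v ∉ X :=
  Nat.notMem_of_lt_sInf hm

theorem trajectory_ne_nil (v : V) : trajectory X g v ≠ [] := by
  simp [trajectory]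

theorem getLast?_trajectory (v : V) :
    (trajectory X g v).getLast? = some (g^[hitTime X g v] v) := by
  rw [trajectory, List.iterate_add]
  simp

theorem isChain_trajectory {A : V → V → Prop} (hg : ∀ v ∉ X, A v (g v)) (v : V) :
    (trajectory X g v).IsChain A := by
  rw [trajectory, ← List.range_map_iterate]
  refine List.isChain_map_of_isChain _ (R := fun i j => i < hitTime X g v ∧ j = i + 1)
    (fun i j ⟨hi, hj⟩ => ?_) ((List.isChain_range_succ _ _).2 fun m hm => ⟨hm, rfl⟩)
  rw [hj, iterate_succ_apply']
  exact hg _ (iterate_notMem_of_lt_hitTime hi)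

theorem eq_of_iterate_eq_of_notMem_image (hg : Set.InjOn g Xᶜ) {s s' : V}
    (hs : s ∉ g '' Xᶜ) (hs' : s' ∉ g '' Xᶜ) :
    ∀ {i j : ℕ}, (∀ m < i, g^[m] s ∉ X) → (∀ m < j, g^[m] s' ∉ X) →
      g^[i] s = g^[j] s' → s = s'
  | 0, 0, _, _, h => h
  | 0, j + 1, _, hj, h =>
    (hs ⟨g^[j] s', hj j j.lt_succ_self, (iterate_succ_apply' g j s').symm.trans h.symm⟩).elim
  | i + 1, 0, hi, _, h =>
    (hs' ⟨g^[i] s, hi i i.lt_succ_self, (iterate_succ_apply' g i s).symm.trans h⟩).elim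
  | i + 1, j + 1, hi, hj, h =>
    eq_of_iterate_eq_of_notMem_image hg hs hs' (fun m hm => hi m (by omega))
      (fun m hm => hj m (by omega))
      (hg (hi i i.lt_succ_self) (hj j j.lt_succ_self) (by
        simpa only [iterate_succ_apply'] using h))

theorem eq_of_mem_trajectory_of_mem_trajectory (hg : Set.InjOn g Xᶜ) {s s' w : V}
    (hs : s ∉ g '' Xᶜ) (hs' : s' ∉ g '' Xᶜ)
    (hw : w ∈ trajectory X g s) (hw' : w ∈ trajectory X g s') : s = s' := by
  obtain ⟨i, hi, rfl⟩ := List.mem_iterate.1 hw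
  obtain ⟨j, hj, hij⟩ := List.mem_iterate.1 hw'
  exact eq_of_iterate_eq_of_notMem_image hg hs hs'
    (fun m hm => iterate_notMem_of_lt_hitTime (by omega))
    (fun m hm => iterate_notMem_of_lt_hitTime (by omega)) hij

theorem exists_mem_trajectory {A : V → V → Prop} (hA : WellFounded A)
    (hg : ∀ v ∉ X, A v (g v)) (hX : ∀ v, ∃ n, g^[n] v ∈ X) (w : V) :
    ∃ s ∉ g '' Xᶜ, w ∈ trajectory X g s := by
  induction w using hA.induction with
  | _ w ih =>
    by_cases hw : w ∈ g '' Xᶜ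
    · obtain ⟨u, hu, rfl⟩ := hw
      obtain ⟨s, hs, hus⟩ := ih u (hg u hu)
      obtain ⟨i, hi, rfl⟩ := List.mem_iterate.1 hus
      have : i ≠ hitTime X g s := fun h => hu (h ▸ iterate_hitTime_mem (hX s))
      refine ⟨s, hs, List.mem_iterate.2 ⟨i + 1, by omega, ?_⟩⟩
      exact (iterate_succ_apply' ..).symm
    · exact ⟨w, hw, List.mem_iterate.2 ⟨0, by omega, rfl⟩⟩

end Trajectory

namespace PhyloNet

variable {V : Type*} [Fintype V] [DecidableEq V] (N : PhyloNet V)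

theorem not_arc_of_mem_X {v : V} (hv : v ∈ N.X) (w : V) : ¬ N.Arc v w :=
  outDeg_eq_zero_iff.1 ((N.leaf_iff v).1 hv) w

theorem not_arc_root (u : V) : ¬ N.Arc u N.root :=
  fun h => N.acyclic _ (.tail' (N.reach u) h)

theorem wellFounded_arc : WellFounded N.Arc :=
  wellFounded_of_acyclic N.acyclic

theorem wellFounded_flip_arc : WellFounded (flip N.Arc) :=
  wellFounded_of_acyclic fun v h => N.acyclic v (Relation.transGen_swap.1 h)

theorem antichainIn_X : AntichainIn N N.X := fun u hu _ _ _ h => by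
  obtain ⟨w, huw, -⟩ := Relation.TransGen.head'_iff.1 h
  exact N.not_arc_of_mem_X hu w huw

end PhyloNet

section PathPartition

variable {V : Type*} [Fintype V] [DecidableEq V] {N : PhyloNet V}

theorem IsPathPartition.card_eq {P : Finset (List V)} (hP : IsPathPartition N P) :
    P.card = N.X.card := by
  obtain ⟨hpaths, hdisj, hcov⟩ := hP
  refine Finset.card_bij (fun p hp => p.getLast (hpaths p hp).1.1) (fun p hp => ?_)
    (fun p hp q hq hpq => ?_) (fun x hx => ?_)
  · obtain ⟨x, hx, hpx⟩ := (hpaths p hp).2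
    rwa [← List.getLast_eq_iff_getLast?_eq_some (hpaths p hp).1.1 |>.2 hpx] at hx
  · by_contra hne
    exact hdisj p hp q hq hne _ (List.getLast_mem _) (hpq.symm ▸ List.getLast_mem _)
  · obtain ⟨p, hp, hxp⟩ := hcov x
    refine ⟨p, hp, ?_⟩
    rcases (hpaths p hp).1.2.1.getLast?_eq_or_exists_rel hxp with hlast | ⟨w, hw⟩
    · exact (List.getLast_eq_iff_getLast?_eq_some _).2 hlast
    · exact absurd hw (N.not_arc_of_mem_X hx w)

theorem IsPathPartition.eq_of_pair_infix {P : Finset (List V)} (hP : IsPathPartition N P)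
    {p q : List V} (hp : p ∈ P) (hq : q ∈ P) {u u' v : V} (hu : [u, v] <:+: p)
    (hu' : [u', v] <:+: q) : u = u' := by
  obtain rfl : p = q := by
    by_contra hne
    exact hP.2.1 p hp q hq hne v (hu.subset (by simp)) (hu'.subset (by simp))
  exact (hP.1 p hp).1.2.2.eq_of_pair_infix hu hu'

theorem IsPathPartition.exists_parent {P : Finset (List V)} (hP : IsPathPartition N P) (v : V) :
    ∃ u, (v ≠ N.root → N.Arc u v) ∧ ∀ p ∈ P, ∀ u', [u', v] <:+: p → u' = u := by
  by_cases hpred : ∃ p ∈ P, ∃ u, [u, v] <:+: p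
  · obtain ⟨p, hp, u, hu⟩ := hpred
    exact ⟨u, fun _ => (hP.1 p hp).1.2.1.rel_of_pair_infix hu,
      fun q hq u' hu' => hP.eq_of_pair_infix hq hp hu' hu⟩
  · push Not at hpred
    rcases (N.reach v).cases_tail with rfl | ⟨u, -, hu⟩
    · exact ⟨N.root, fun h => (h rfl).elim, fun p hp u' hu' => absurd hu' (hpred p hp u')⟩
    · exact ⟨u, fun _ => hu, fun p hp u' hu' => absurd hu' (hpred p hp u')⟩

theorem IsPathPartition.treeBased {P : Finset (List V)} (hP : IsPathPartition N P) :
    TreeBased N := by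
  choose f hfArc hfPath using hP.exists_parent
  obtain ⟨hpaths, -, hcov⟩ := hP
  refine ⟨fun u v => v ≠ N.root ∧ f v = u,
    ⟨fun u v h => h.2 ▸ hfArc v h.1, fun v => ?_, fun v hv => ?_⟩, fun v hv => ?_⟩
  · rw [inDeg_of_parentMap]
    simp
  · rw [inDeg_of_parentMap, if_neg hv]
  · obtain ⟨p, hp, hvp⟩ := hcov v
    rcases (List.isChain_isInfix p).getLast?_eq_or_exists_rel hvp with hlast | ⟨w, hw⟩
    · obtain ⟨x, hx, hpx⟩ := (hpaths p hp).2
      rw [hlast, Option.some_inj] at hpx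
      exact hpx ▸ hx
    · have hvw : N.Arc v w := (hpaths p hp).1.2.1.rel_of_pair_infix hw
      exact (outDeg_eq_zero_iff.1 hv w
        ⟨fun h => N.not_arc_root v (h ▸ hvw), (hfPath w p hp v hw).symm⟩).elim

theorem IsSupportTree.exists_isPathPartition {T : V → V → Prop} (hT : IsSupportTree N T) :
    ∃ P, IsPathPartition N P := by
  classical
  obtain ⟨⟨hTA, hT0, hT1⟩, hleaf⟩ := hT
  have hchild : ∀ v ∉ N.X, ∃ w, T v w := fun v hv => by
    by_contra! h
    exact hv (hleaf v (outDeg_eq_zero_iff.2 h))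
  choose! g hg using hchild
  have hinj : Set.InjOn g (↑N.X)ᶜ := fun u hu u' hu' h => by
    refine eq_of_inDeg_le_one (A := T) ?_ (hg u hu) (h ▸ hg u' hu')
    by_cases hr : g u = N.root
    · exact ((hT0 _).2 hr).trans_le zero_le_one
    · exact (hT1 _ hr).le
  have hgA : ∀ v ∉ (N.X : Set V), N.Arc v (g v) := fun v hv => hTA _ _ (hg v hv)
  have hX := exists_iterate_mem N.wellFounded_flip_arc hgA
  refine ⟨(Finset.univ.filter (· ∉ g '' (↑N.X)ᶜ)).image (trajectory (↑N.X) g),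
    ?_, ?_, ?_⟩
  · simp only [Finset.forall_mem_image]
    intro s _
    have hs := isChain_trajectory hgA s
    exact ⟨⟨trajectory_ne_nil s, hs, hs.nodup_of_acyclic N.acyclic⟩,
      _, iterate_hitTime_mem (hX s), getLast?_trajectory s⟩
  · simp only [PairwiseDisj, Finset.forall_mem_image, Finset.mem_filter]
    intro s hs s' hs' hne w hw hw'
    exact hne (congrArg _ (eq_of_mem_trajectory_of_mem_trajectory hinj hs.2 hs'.2 hw hw'))
  · intro w
    obtain ⟨s, hs, hw⟩ := exists_mem_trajectory N.wellFounded_arc hgA hX w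
    exact ⟨_, Finset.mem_image_of_mem _ (by simpa using hs), hw⟩

end PathPartition

/-- tree-based iff there is an antichain `S` and a partition of the
vertex set into `|S|` chains, each forming a path in `N` ending at a leaf in `X`. -/
theorem stmt5 {V : Type*} [Fintype V] [DecidableEq V] (N : PhyloNet V) :
    TreeBased N ↔
      ∃ S : Finset V, AntichainIn N S ∧
        ∃ P : Finset (List V), IsPathPartition N P ∧ P.card = S.card := by
  constructor
  · rintro ⟨T, hT⟩
    obtain ⟨P, hP⟩ := hT.exists_isPathPartition
    exact ⟨N.X, N.antichainIn_X, P, hP, hP.card_eq⟩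
  · rintro ⟨-, -, P, hP, -⟩
    exact hP.treeBased
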